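/- Suppose $h : \mathbb{R} \to \mathbb{R}$ and there exists a class-$\kappa$ function $\alpha_3$ such that whenever $h(x) > 0$ there exists a control $u$ with $\tilde\mu(x,u) - \tilde\sigma(x)^2/h(x) \geq -h(x)^2 \alpha_3(h(x))$, where $\tilde\mu, \tilde\sigma$ are the drift and diffusion of $h(x_t)$. Then $B(x) := 1/h(x)$ satisfies the RCBF drift condition: the drift of $B(x_t)$, namely $-h^{-2}\tilde\mu + h^{-3}\tilde\sigma^2$, is at most $\alpha_3(h(x))$, and $1/\alpha_1(h) \leq B \leq 1/\alpha_2(h)$ with $\alpha_1(h) = \alpha_2(h) = h$. -/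
import Mathlib

/-- If the modified ZCBF condition `μ̃ - σ̃²/h ≥ -h²·α₃(h)` holds (for some control `u`)
whenever `h x > 0`, then `B = 1/h` satisfies the RCBF drift condition: the drift of `B`,
namely `-h⁻²μ̃ + h⁻³σ̃²`, is at most `α₃(h x)`; moreover `1/α₁(h) ≤ B ≤ 1/α₂(h)` with
`α₁ = α₂ = id`. -/
theorem stmt8 {U : Type*} (h : ℝ → ℝ) (μ : ℝ → U → ℝ) (σ : ℝ → ℝ)
    (α₃ : ℝ → ℝ) (hα₃ : StrictMono α₃) (hα₃0 : α₃ 0 = 0)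
    (hyp : ∀ x : ℝ, 0 < h x → ∃ u : U,
      μ x u - (σ x) ^ 2 / h x ≥ -(h x) ^ 2 * α₃ (h x)) :
    ∀ x : ℝ, 0 < h x →
      (∃ u : U, -((h x) ^ 2)⁻¹ * μ x u + ((h x) ^ 3)⁻¹ * (σ x) ^ 2 ≤ α₃ (h x)) ∧
      (∃ α₁ α₂ : ℝ → ℝ, α₁ = id ∧ α₂ = id ∧
        1 / α₁ (h x) ≤ 1 / h x ∧ 1 / h x ≤ 1 / α₂ (h x)) := by
  intro x hx
  obtain ⟨u, hu⟩ := hyp x hx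
  refine ⟨⟨u, ?_⟩, id, id, rfl, rfl, le_refl _, le_refl _⟩
  have h2 : (0:ℝ) < (h x) ^ 2 := by positivity
  have hne : h x ≠ 0 := ne_of_gt hx
  have key : μ x u - (σ x)^2 / h x ≥ -(h x)^2 * α₃ (h x) := hu
  rw [ge_iff_le, neg_mul, neg_le, neg_sub] at key
  have : -((h x) ^ 2)⁻¹ * μ x u + ((h x) ^ 3)⁻¹ * (σ x) ^ 2
      = ((h x)^2)⁻¹ * ((σ x)^2 / h x - μ x u) := by
    field_simp; ring
  rw [this]
  calc ((h x)^2)⁻¹ * ((σ x)^2 / h x - μ x u) ≤ ((h x)^2)⁻¹ * ((h x)^2 * α₃ (h x)) := by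
        exact mul_le_mul_of_nonneg_left key (by positivity)
    _ = α₃ (h x) := by field_simp
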